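/- arXiv:1303.5982 — 4 statements merged into one kernel-verified Lean document; each statement's English description precedes it below -/
import Mathlib

section
/- Let (α₁,α₂) be consistent Whitney parameters, and define α₁* = α₁(1+√α₂)⁻¹, α₂* = √α₂, with W* the Whitney box with parameters (α₁*, α₂*). Then for every (y,t) ∈ ℝ^{n+1}_+, ⋃_{(z,s)∈W*(y,t)} W*(z,s) ⊆ W(y,t), where W is the Whitney box with parameters (α₁,α₂). -/
open Metric Set

/-- The Whitney box with parameters (β₁, β₂) at the point q = (y,t). -/
def whitneyBox (n : ℕ) (β₁ β₂ : ℝ) (q : EuclideanSpace ℝ (Fin n) × ℝ) :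
    Set (EuclideanSpace ℝ (Fin n) × ℝ) :=
  {p | dist p.1 q.1 < β₁ * q.2 ∧ β₂⁻¹ * q.2 < p.2 ∧ p.2 < β₂ * q.2}

/-! Whitney boxes compose: a box of parameters (γ₁, γ₂) around a point of a box of parameters
(β₁, β₂) lies in the box of parameters (β₁ + γ₁β₂, β₂γ₂), by the triangle inequality in space and
multiplicativity in height. With β = γ = (α₁(1 + √α₂)⁻¹, √α₂) these are exactly (α₁, α₂). -/

theorem whitneyBox_subset_of_mem {n : ℕ} {β₁ β₂ γ₁ γ₂ : ℝ} (hγ₁ : 0 ≤ γ₁) (hγ₂ : 0 < γ₂)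
    {q r : EuclideanSpace ℝ (Fin n) × ℝ} (hq : q ∈ whitneyBox n β₁ β₂ r) :
    whitneyBox n γ₁ γ₂ q ⊆ whitneyBox n (β₁ + γ₁ * β₂) (β₂ * γ₂) r := by
  obtain ⟨hq_dist, hq_low, hq_high⟩ := hq
  rintro p ⟨hp_dist, hp_low, hp_high⟩
  refine ⟨?_, ?_, ?_⟩
  · calc dist p.1 r.1 ≤ dist p.1 q.1 + dist q.1 r.1 := dist_triangle _ _ _
      _ < γ₁ * q.2 + β₁ * r.2 := add_lt_add hp_dist hq_dist
      _ ≤ γ₁ * (β₂ * r.2) + β₁ * r.2 := by gcongr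
      _ = (β₁ + γ₁ * β₂) * r.2 := by ring
  · calc (β₂ * γ₂)⁻¹ * r.2 = γ₂⁻¹ * (β₂⁻¹ * r.2) := by rw [mul_inv]; ring
      _ < γ₂⁻¹ * q.2 := by gcongr
      _ < p.2 := hp_low
  · calc p.2 < γ₂ * q.2 := hp_high
      _ < γ₂ * (β₂ * r.2) := by gcongr
      _ = β₂ * γ₂ * r.2 := by ring

theorem whitney_star_union_general (n : ℕ) (α₁ α₂ : ℝ)
    (h1 : 0 < α₁) (h2 : α₁ < α₂⁻¹)
    (y : EuclideanSpace ℝ (Fin n)) (t : ℝ) :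
    (⋃ p ∈ whitneyBox n (α₁ * (1 + Real.sqrt α₂)⁻¹) (Real.sqrt α₂) (y, t),
        whitneyBox n (α₁ * (1 + Real.sqrt α₂)⁻¹) (Real.sqrt α₂) p) ⊆
      whitneyBox n α₁ α₂ (y, t) := by
  have hα₂ : 0 < α₂ := inv_pos.mp (h1.trans h2)
  have hσ : 0 < Real.sqrt α₂ := Real.sqrt_pos.mpr hα₂
  have hβ₁ : 0 ≤ α₁ * (1 + Real.sqrt α₂)⁻¹ := by positivity
  refine iUnion₂_subset fun q hq => (whitneyBox_subset_of_mem hβ₁ hσ hq).trans_eq ?_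
  congr 1
  · field_simp
  · exact Real.mul_self_sqrt hα₂.le

/-- with α₁* = α₁(1+√α₂)⁻¹ and α₂* = √α₂,
⋃_{(z,s)∈W*(y,t)} W*(z,s) ⊆ W(y,t). -/
theorem whitney_star_union (n : ℕ) (α₁ α₂ : ℝ)
    (h1 : 0 < α₁) (h2 : α₁ < α₂⁻¹) (h3 : α₂⁻¹ < 1)
    (y : EuclideanSpace ℝ (Fin n)) (t : ℝ) (ht : 0 < t) :
    (⋃ p ∈ whitneyBox n (α₁ * (1 + Real.sqrt α₂)⁻¹) (Real.sqrt α₂) (y, t),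
        whitneyBox n (α₁ * (1 + Real.sqrt α₂)⁻¹) (Real.sqrt α₂) p) ⊆
      whitneyBox n α₁ α₂ (y, t) :=
  whitney_star_union_general n α₁ α₂ h1 h2 y t
end

section
/- Let (α₁,α₂) be consistent Whitney parameters, set α₁* = α₁(1+√α₂)⁻¹, α₂* = √α₂ and α₁** = α₁[2(1+√α₂)α₂^{1/4}]⁻¹, α₂** = α₂^{1/4}, with W* and W** the corresponding Whitney boxes. Then for every (y,t) ∈ ℝ^{n+1}_+, W**(y,t) ⊆ ⋂_{(z,s)∈W**(y,t)} W*(z,s). -/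
/-!
W** is the Whitney box W_{β,c} with c = α₂^{1/4} and β chosen so that 2βc = α₁* and c² = α₂*.
If p and q lie in W_{β,c}(y,t), then |p₁ - q₁| < 2βt, and the heights satisfy t/c < p₂, q₂ < ct;
in particular t < c·q₂, so |p₁ - q₁| < 2βc·q₂ and q₂/c² < p₂ < c²·q₂, i.e. p ∈ W_{2βc,c²}(q).
-/

open Metric Set

theorem whitneyBox_subset_of_mem_s8 {n : ℕ} {β₁ c : ℝ} (hβ₁ : 0 ≤ β₁) (hc : 0 < c)
    {x q : EuclideanSpace ℝ (Fin n) × ℝ} (hq : q ∈ whitneyBox n β₁ c x) :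
    whitneyBox n β₁ c x ⊆ whitneyBox n (2 * β₁ * c) (c ^ 2) q := by
  rintro p ⟨hp_dist, hp_low, hp_high⟩
  obtain ⟨hq_dist, hq_low, hq_high⟩ := hq
  have ht_lt : x.2 < c * q.2 := by
    rwa [inv_mul_lt_iff₀ hc] at hq_low
  have ht_gt : c⁻¹ * q.2 < x.2 := by
    rwa [inv_mul_lt_iff₀ hc]
  refine ⟨?_, ?_, ?_⟩
  · calc dist p.1 q.1 ≤ dist p.1 x.1 + dist q.1 x.1 := dist_triangle_right _ _ _
      _ < β₁ * x.2 + β₁ * x.2 := add_lt_add hp_dist hq_dist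
      _ ≤ β₁ * (c * q.2) + β₁ * (c * q.2) := by gcongr
      _ = 2 * β₁ * c * q.2 := by ring
  · calc (c ^ 2)⁻¹ * q.2 = c⁻¹ * (c⁻¹ * q.2) := by ring
      _ < c⁻¹ * x.2 := by gcongr
      _ < p.2 := hp_low
  · calc p.2 < c * x.2 := hp_high
      _ < c * (c * q.2) := by gcongr
      _ = c ^ 2 * q.2 := by ring

theorem Real.rpow_quarter_sq {a : ℝ} (ha : 0 ≤ a) : (a ^ ((1 : ℝ) / 4)) ^ 2 = √a := by
  rw [← Real.rpow_natCast, ← Real.rpow_mul ha, Real.sqrt_eq_rpow]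
  norm_num

theorem whitney_dstar_inter_general (n : ℕ) (α₁ α₂ : ℝ)
    (h1 : 0 < α₁) (h2 : α₁ < α₂⁻¹)
    (y : EuclideanSpace ℝ (Fin n)) (t : ℝ) :
    whitneyBox n (α₁ * (2 * (1 + Real.sqrt α₂) * α₂ ^ ((1:ℝ)/4))⁻¹)
        (α₂ ^ ((1:ℝ)/4)) (y, t) ⊆
      ⋂ p ∈ whitneyBox n (α₁ * (2 * (1 + Real.sqrt α₂) * α₂ ^ ((1:ℝ)/4))⁻¹)
          (α₂ ^ ((1:ℝ)/4)) (y, t),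
        whitneyBox n (α₁ * (1 + Real.sqrt α₂)⁻¹) (Real.sqrt α₂) p := by
  have hα₂ : 0 < α₂ := inv_pos.mp (h1.trans h2)
  have hA : 0 < α₂ ^ ((1:ℝ)/4) := Real.rpow_pos_of_pos hα₂ _
  have h_radius : 2 * (α₁ * (2 * (1 + √α₂) * α₂ ^ ((1:ℝ)/4))⁻¹) * α₂ ^ ((1:ℝ)/4)
      = α₁ * (1 + √α₂)⁻¹ := by
    have : 0 < 1 + √α₂ := by positivity
    field_simp
  refine subset_iInter₂ fun q hq => ?_
  have h_box := whitneyBox_subset_of_mem_s8 (by positivity) hA hq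
  rwa [h_radius, Real.rpow_quarter_sq hα₂.le] at h_box

/-- with α₁* = α₁(1+√α₂)⁻¹, α₂* = √α₂,
α₁** = α₁[2(1+√α₂)α₂^{1/4}]⁻¹, α₂** = α₂^{1/4},
one has W**(y,t) ⊆ ⋂_{(z,s)∈W**(y,t)} W*(z,s). -/
theorem whitney_dstar_inter (n : ℕ) (α₁ α₂ : ℝ)
    (h1 : 0 < α₁) (h2 : α₁ < α₂⁻¹) (h3 : α₂⁻¹ < 1)
    (y : EuclideanSpace ℝ (Fin n)) (t : ℝ) (ht : 0 < t) :
    whitneyBox n (α₁ * (2 * (1 + Real.sqrt α₂) * α₂ ^ ((1:ℝ)/4))⁻¹)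
        (α₂ ^ ((1:ℝ)/4)) (y, t) ⊆
      ⋂ p ∈ whitneyBox n (α₁ * (2 * (1 + Real.sqrt α₂) * α₂ ^ ((1:ℝ)/4))⁻¹)
          (α₂ ^ ((1:ℝ)/4)) (y, t),
        whitneyBox n (α₁ * (1 + Real.sqrt α₂)⁻¹) (Real.sqrt α₂) p :=
  whitney_dstar_inter_general n α₁ α₂ h1 h2 y t
end

section
/- (Carleson bound for the balayage extension.) Let μ be a nonnegative Borel measure on the closed upper half space. Define the balayage 𝒜̄(μ)(x) = ∫∫_{Γ(x)} s^{-n} dμ(z,s) for x ∈ ℝⁿ, where Γ(x) = {(z,s) : |z-x| < s}, and define E(μ)(y,t) = |B(y,t)|⁻¹ ∫_{B(y,t)} 𝒜̄(μ)(x)⁻¹ dx. Then for every ball B ⊆ ℝⁿ, ∫∫_{T(B)} E(μ) dμ ≤ C(n)·|B|, where T(B) = {(y,t) : closure of B(y,t) ⊆ closure of B} is the closed tent over B and C(n) depends only on the dimension n. -/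
open MeasureTheory Metric Set

/-- The balayage 𝒜̄(μ)(x) = ∫∫_{Γ(x)} s^{-n} dμ(z,s). -/
noncomputable def balayage (n : ℕ) (μ : Measure (EuclideanSpace ℝ (Fin n) × ℝ))
    (x : EuclideanSpace ℝ (Fin n)) : ENNReal :=
  ∫⁻ p in {p : EuclideanSpace ℝ (Fin n) × ℝ | dist p.1 x < p.2},
    (ENNReal.ofReal (p.2 ^ n))⁻¹ ∂μ

/-- The extension E(μ)(y,t) = |B(y,t)|⁻¹ ∫_{B(y,t)} 𝒜̄(μ)(x)⁻¹ dx. -/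
noncomputable def balExt (n : ℕ) (μ : Measure (EuclideanSpace ℝ (Fin n) × ℝ))
    (y : EuclideanSpace ℝ (Fin n)) (t : ℝ) : ENNReal :=
  (volume (ball y t))⁻¹ * ∫⁻ x in ball y t, (balayage n μ x)⁻¹

/-- The cone `Γ(x)` is a measurable subset of the upper half space. -/
lemma measurableSet_cone (n : ℕ) (x : EuclideanSpace ℝ (Fin n)) :
    MeasurableSet {p : EuclideanSpace ℝ (Fin n) × ℝ | dist p.1 x < p.2} :=
  (isOpen_lt (continuous_fst.dist continuous_const) continuous_snd).measurableSet

/-- Volume of balls in `EuclideanSpace ℝ (Fin n)`, valid also for `n = 0`. -/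
lemma volume_ball_eq (n : ℕ) (y : EuclideanSpace ℝ (Fin n)) {t : ℝ} (ht : 0 < t) :
    volume (ball y t)
      = ENNReal.ofReal (t ^ n) * volume (ball (0 : EuclideanSpace ℝ (Fin n)) 1) := by
  rcases Nat.eq_zero_or_pos n with hn | hn
  · subst hn
    have huniv : ∀ (z : EuclideanSpace ℝ (Fin 0)) {s : ℝ}, 0 < s → ball z s = univ := by
      intro z s hs
      ext w
      simp [mem_ball, Subsingleton.elim w z, hs]
    rw [huniv y ht, huniv 0 one_pos]
    simp
  · haveI : Nonempty (Fin n) := ⟨⟨0, hn⟩⟩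
    rw [Measure.addHaar_ball _ _ ht.le, finrank_euclideanSpace_fin]

/-- Volume of closed balls equals that of open balls (positive radius), valid also for `n = 0`. -/
lemma volume_closedBall_eq_ball (n : ℕ) (y : EuclideanSpace ℝ (Fin n)) {t : ℝ} (ht : 0 < t) :
    volume (closedBall y t) = volume (ball y t) := by
  rcases Nat.eq_zero_or_pos n with hn | hn
  · subst hn
    have h1 : ball y t = univ := by
      ext w; simp [mem_ball, Subsingleton.elim w y, ht]
    have h2 : closedBall y t = univ := by
      ext w; simp [mem_closedBall, Subsingleton.elim w y, ht.le]
    rw [h1, h2]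
  · haveI : Nonempty (Fin n) := ⟨⟨0, hn⟩⟩
    exact Measure.addHaar_closedBall_eq_addHaar_ball _ _ _

/-- Measurability of the balayage. -/
lemma measurable_balayage (n : ℕ) (μ : Measure (EuclideanSpace ℝ (Fin n) × ℝ)) [SFinite μ] :
    Measurable (balayage n μ) := by
  have hrw : ∀ x, balayage n μ x
      = ∫⁻ p, (if dist p.1 x < p.2 then (ENNReal.ofReal (p.2 ^ n))⁻¹ else 0) ∂μ := by
    intro x
    rw [balayage, ← lintegral_indicator (measurableSet_cone n x)]
    exact lintegral_congr fun p => by simp [Set.indicator_apply]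
  rw [funext hrw]
  apply Measurable.lintegral_prod_right
  apply Measurable.ite
  · exact (isOpen_lt ((continuous_fst.comp continuous_snd).dist continuous_fst)
      (continuous_snd.comp continuous_snd)).measurableSet
  · fun_prop
  · fun_prop

/-- Carleson bound for the balayage extension: for every nonnegative
Borel measure μ on the closed upper half space and every ball B = B(x₀,r),
∫∫_{T(B)} E(μ) dμ ≤ C(n) |B|, where T(B) is the closed tent over B. -/
theorem carleson_bound_balayage (n : ℕ) :
    ∃ C : ℝ, 0 < C ∧
      ∀ (μ : Measure (EuclideanSpace ℝ (Fin n) × ℝ)) [SFinite μ],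
        ∀ (x₀ : EuclideanSpace ℝ (Fin n)) (r : ℝ), 0 < r →
          (∫⁻ p in {p : EuclideanSpace ℝ (Fin n) × ℝ |
              0 ≤ p.2 ∧ closedBall p.1 p.2 ⊆ closedBall x₀ r},
            balExt n μ p.1 p.2 ∂μ) ≤
            ENNReal.ofReal C * volume (ball x₀ r) := by
  classical
  set E := EuclideanSpace ℝ (Fin n)
  set κ : ENNReal := volume (ball (0 : E) 1) with hκ
  have hκ0 : κ ≠ 0 := (measure_ball_pos volume (0 : E) one_pos).ne'
  have hκtop : κ ≠ ⊤ := measure_ball_lt_top.ne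
  refine ⟨(κ⁻¹).toReal, ENNReal.toReal_pos (by simpa using hκtop) (by simpa using hκ0), ?_⟩
  intro μ _ x₀ r hr
  have hC : ENNReal.ofReal (κ⁻¹).toReal = κ⁻¹ :=
    ENNReal.ofReal_toReal (by simpa using hκ0)
  rw [hC]
  -- the closed superset of the tent
  set T : Set (E × ℝ) := {p : E × ℝ | ball p.1 p.2 ⊆ closedBall x₀ r} with hT
  have hTclosed : IsClosed T := by
    rw [← isOpen_compl_iff]
    have : Tᶜ = ⋃ x ∈ (closedBall x₀ r)ᶜ, {p : E × ℝ | dist x p.1 < p.2} := by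
      ext p
      simp only [hT, mem_compl_iff, mem_setOf_eq, Set.not_subset, mem_iUnion, mem_ball]
      exact ⟨fun ⟨x, hx1, hx2⟩ => ⟨x, hx2, hx1⟩, fun ⟨x, hx2, hx1⟩ => ⟨x, hx1, hx2⟩⟩
    rw [this]
    exact isOpen_biUnion fun x _ =>
      isOpen_lt (continuous_const.dist continuous_fst) continuous_snd
  have hTmeas : MeasurableSet T := hTclosed.measurableSet
  have hsub : {p : E × ℝ | 0 ≤ p.2 ∧ closedBall p.1 p.2 ⊆ closedBall x₀ r} ⊆ T := by
    intro p hp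
    exact (ball_subset_closedBall).trans hp.2
  -- abbreviations
  set A : E → ENNReal := balayage n μ with hA
  have hAmeas : Measurable A := measurable_balayage n μ
  set D := closedBall x₀ r with hD
  set F : E × ℝ → E → ENNReal := fun p x =>
    (ENNReal.ofReal (p.2 ^ n))⁻¹ * (if dist x p.1 < p.2 then (A x)⁻¹ else 0) with hF
  have hFmeas : Measurable (Function.uncurry F) := by
    apply Measurable.mul
    · fun_prop
    · apply Measurable.ite
      · exact (isOpen_lt (continuous_snd.dist (continuous_fst.comp continuous_fst))
          (continuous_snd.comp continuous_fst)).measurableSet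
      · exact (hAmeas.comp measurable_snd).inv
      · exact measurable_const
  calc
    (∫⁻ p in {p : E × ℝ | 0 ≤ p.2 ∧ closedBall p.1 p.2 ⊆ closedBall x₀ r},
        balExt n μ p.1 p.2 ∂μ)
        ≤ ∫⁻ p in T, balExt n μ p.1 p.2 ∂μ := lintegral_mono_set hsub
    _ ≤ ∫⁻ p in T, (κ⁻¹ * ∫⁻ x in D, F p x) ∂μ := by
        apply setLIntegral_mono' hTmeas
        intro p hp
        rcases le_or_gt p.2 0 with hp2 | hp2
        · have : ball p.1 p.2 = ∅ := ball_eq_empty.2 hp2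
          simp [balExt, this]
        · -- positive radius case
          have hball : ball p.1 p.2 ⊆ D := hp
          have hvol : volume (ball p.1 p.2) = ENNReal.ofReal (p.2 ^ n) * κ :=
            volume_ball_eq n p.1 hp2
          have hpow0 : ENNReal.ofReal (p.2 ^ n) ≠ 0 :=
            (ENNReal.ofReal_pos.mpr (pow_pos hp2 n)).ne'
          have hinv : (volume (ball p.1 p.2))⁻¹
              = (ENNReal.ofReal (p.2 ^ n))⁻¹ * κ⁻¹ := by
            rw [hvol, ENNReal.mul_inv (Or.inr hκtop) (Or.inr hκ0)]
          have hind : (∫⁻ x in ball p.1 p.2, (A x)⁻¹)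
              = ∫⁻ x in D, (if dist x p.1 < p.2 then (A x)⁻¹ else 0) := by
            have hix : ∀ x, (if dist x p.1 < p.2 then (A x)⁻¹ else 0)
                = (ball p.1 p.2).indicator (fun x => (A x)⁻¹) x := by
              intro x; simp [Set.indicator_apply, mem_ball]
            simp only [hix]
            rw [lintegral_indicator measurableSet_ball,
              Measure.restrict_restrict measurableSet_ball,
              Set.inter_eq_self_of_subset_left hball]
          have : balExt n μ p.1 p.2
              = κ⁻¹ * ∫⁻ x in D, F p x := by
            rw [balExt, hinv, hind, hF]
            simp only
            rw [lintegral_const_mul' _ _ (by simpa using hpow0)]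
            ring
          exact this.le
    _ = κ⁻¹ * ∫⁻ p in T, (∫⁻ x in D, F p x) ∂μ :=
        lintegral_const_mul' _ _ (by simpa using hκ0)
    _ = κ⁻¹ * ∫⁻ x in D, (∫⁻ p in T, F p x ∂μ) := by
        rw [lintegral_lintegral_swap (hFmeas.aemeasurable)]
    _ ≤ κ⁻¹ * ∫⁻ x in D, 1 := by
        apply mul_le_mul_right
        apply setLIntegral_mono' measurableSet_closedBall
        intro x _
        -- the inner integral is at most (A x)⁻¹ * A x ≤ 1
        have hptw : ∀ p : E × ℝ, F p x
            = (A x)⁻¹ * ({p' : E × ℝ | dist p'.1 x < p'.2}.indicator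
                (fun p' => (ENNReal.ofReal (p'.2 ^ n))⁻¹) p) := by
          intro p
          by_cases h : dist p.1 x < p.2
          · have h' : dist x p.1 < p.2 := by rwa [dist_comm]
            simp [hF, Set.indicator_apply, h, h', mul_comm]
          · have h' : ¬ dist x p.1 < p.2 := by rwa [dist_comm]
            simp [hF, Set.indicator_apply, h, h']
        simp only [hptw]
        have hindmeas : Measurable ({p' : E × ℝ | dist p'.1 x < p'.2}.indicator
            (fun p' => (ENNReal.ofReal (p'.2 ^ n))⁻¹)) := by
          apply Measurable.indicator
          · fun_prop
          · exact measurableSet_cone n x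
        rw [lintegral_const_mul _ hindmeas]
        calc (A x)⁻¹ * ∫⁻ p in T, {p' : E × ℝ | dist p'.1 x < p'.2}.indicator
              (fun p' => (ENNReal.ofReal (p'.2 ^ n))⁻¹) p ∂μ
            ≤ (A x)⁻¹ * ∫⁻ p, {p' : E × ℝ | dist p'.1 x < p'.2}.indicator
              (fun p' => (ENNReal.ofReal (p'.2 ^ n))⁻¹) p ∂μ :=
              mul_le_mul_right (setLIntegral_le_lintegral _ _) _
          _ = (A x)⁻¹ * A x := by
              rw [lintegral_indicator (measurableSet_cone n x)]
              rfl
          _ ≤ 1 := ENNReal.inv_mul_le_one _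
    _ = κ⁻¹ * volume (ball x₀ r) := by
        rw [setLIntegral_one, ← volume_closedBall_eq_ball n x₀ hr]
end

section
/- (Carleson functional controls tent integrals — endpoint multiplication ingredient.) Let μ be a nonnegative Borel measure on ℝ^{n+1}_+ with Carleson norm C_μ = sup_{B} μ(T(B))/|B| < ∞ (supremum over all balls B ⊆ ℝⁿ, T(B) the tent over B), and let f : ℝ^{n+1}_+ → [0,∞] be measurable with nontangential maximal function 𝒩(f) ∈ L^p(ℝⁿ) for some 0 < p < ∞. Then ∫∫_{ℝ^{n+1}_+} f(y,t)^p dμ(y,t) ≤ C(n,p) · ‖𝒩(f)‖_{L^p}^p · C_μ. -/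
/-!
For `λ ≥ 0` the superlevel set `{λ < 𝒩 f}` is the open set `O = ⋃_{λ < f(y,t)} B(y,t)`, so every
point of the upper half-space where `f > λ` lies in the tent `T(O)`. A Vitali covering of the
balls `B(y,t) ⊆ O` bounds `μ(T(O))` by `5ⁿ C_μ |O|`, whence `μ {f > λ} ≤ 5ⁿ C_μ |{𝒩 f > λ}|`
for every `λ`, and the layer cake formula integrates this comparison of distribution functions.
Applied to `f ^ p`, with `𝒩(f ^ p) ≤ (𝒩 f) ^ p`, this gives the theorem with `C(n,p) = 5ⁿ`.
-/

open MeasureTheory Metric Set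

section LayerCake

variable {α β : Type*} [MeasurableSpace α] [MeasurableSpace β]

theorem lintegral_eq_lintegral_meas_ofReal_lt (ν : Measure α) {g : α → ENNReal}
    (hg : Measurable g) :
    ∫⁻ x, g x ∂ν = ∫⁻ t in Ioi (0 : ℝ), ν {x | ENNReal.ofReal t < g x} := by
  by_cases htop : ν {x | g x = ⊤} = 0
  · have hfin : ∀ᵐ x ∂ν, g x ≠ ⊤ := by simpa [ae_iff] using htop
    calc ∫⁻ x, g x ∂ν = ∫⁻ x, ENNReal.ofReal (g x).toReal ∂ν :=
          lintegral_congr_ae (hfin.mono fun x hx => (ENNReal.ofReal_toReal hx).symm)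
      _ = ∫⁻ t in Ioi (0 : ℝ), ν {x | t < (g x).toReal} :=
          lintegral_eq_lintegral_meas_lt ν (ae_of_all _ fun _ => ENNReal.toReal_nonneg)
            hg.ennreal_toReal.aemeasurable
      _ = ∫⁻ t in Ioi (0 : ℝ), ν {x | ENNReal.ofReal t < g x} := by
          refine setLIntegral_congr_fun measurableSet_Ioi fun t ht => measure_congr ?_
          filter_upwards [hfin] with x hx
          exact propext (ENNReal.ofReal_lt_iff_lt_toReal (le_of_lt ht) hx).symm
  · rw [lintegral_eq_top_of_measure_eq_top_ne_zero hg.aemeasurable htop, eq_comm, eq_top_iff]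
    calc ⊤ = ∫⁻ _ in Ioi (0 : ℝ), ν {x | g x = ⊤} := by
          rw [setLIntegral_const, Real.volume_Ioi, ENNReal.mul_top htop]
      _ ≤ ∫⁻ t in Ioi (0 : ℝ), ν {x | ENNReal.ofReal t < g x} :=
          lintegral_mono fun t => measure_mono fun x (hx : g x = ⊤) => by simp [hx]

theorem lintegral_le_mul_of_meas_lt_le {μ : Measure α} {ν : Measure β} {g : α → ENNReal}
    {h : β → ENNReal} (hg : Measurable g) (hh : Measurable h) (K : ENNReal)
    (hdist : ∀ t : ENNReal, μ {x | t < g x} ≤ K * ν {y | t < h y}) :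
    ∫⁻ x, g x ∂μ ≤ K * ∫⁻ y, h y ∂ν := by
  have hmeas : Measurable fun t : ℝ => ν {y | ENNReal.ofReal t < h y} :=
    Antitone.measurable fun _ _ hst => measure_mono fun _ hy =>
      (ENNReal.ofReal_le_ofReal hst).trans_lt hy
  rw [lintegral_eq_lintegral_meas_ofReal_lt μ hg, lintegral_eq_lintegral_meas_ofReal_lt ν hh,
    ← lintegral_const_mul K hmeas]
  exact lintegral_mono fun t => hdist _

end LayerCake

section Tent

variable {α : Type*} [PseudoMetricSpace α]

def tent (O : Set α) : Set (α × ℝ) :=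
  {q | 0 < q.2 ∧ ball q.1 q.2 ⊆ O}

noncomputable def nontangentialMax (f : α × ℝ → ENNReal) (x : α) : ENNReal :=
  ⨆ q ∈ {q : α × ℝ | dist q.1 x < q.2}, f q

theorem setOf_lt_nontangentialMax (f : α × ℝ → ENNReal) (l : ENNReal) :
    {x | l < nontangentialMax f x} = ⋃ q ∈ {q | l < f q}, ball q.1 q.2 := by
  ext x
  simp [nontangentialMax, lt_iSup_iff, dist_comm x, and_comm]

theorem lowerSemicontinuous_nontangentialMax (f : α × ℝ → ENNReal) :
    LowerSemicontinuous (nontangentialMax f) :=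
  lowerSemicontinuous_iff_isOpen_preimage.2 fun l => by
    rw [show nontangentialMax f ⁻¹' Ioi l = _ from setOf_lt_nontangentialMax f l]
    exact isOpen_biUnion fun q _ => isOpen_ball

theorem setOf_lt_inter_subset_tent (f : α × ℝ → ENNReal) (l : ENNReal) :
    {q | l < f q} ∩ {q | 0 < q.2} ⊆ tent {x | l < nontangentialMax f x} := by
  rintro q ⟨hlt, hpos⟩
  rw [setOf_lt_nontangentialMax]
  exact ⟨hpos, subset_biUnion_of_mem (u := fun q : α × ℝ => ball q.1 q.2) hlt⟩

theorem nontangentialMax_rpow_le (f : α × ℝ → ENNReal) {p : ℝ} (hp : 0 ≤ p) (x : α) :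
    nontangentialMax (fun q => f q ^ p) x ≤ nontangentialMax f x ^ p :=
  iSup₂_le fun q hq => ENNReal.rpow_le_rpow
    (le_iSup₂ (f := fun q (_ : q ∈ {q : α × ℝ | dist q.1 x < q.2}) => f q) q hq) hp

variable [MeasurableSpace α] [OpensMeasurableSpace α] [TopologicalSpace.SeparableSpace α]
  {μ : Measure (α × ℝ)} {ν : Measure α} {Cμ D : ENNReal}

theorem measure_tent_inter_le (hμ : ∀ x r, 0 < r → μ (tent (ball x r)) ≤ Cμ * ν (ball x r))
    (hν : ∀ x r, 0 < r → ν (ball x (5 * r)) ≤ D * ν (ball x r)) (O : Set α) (R : ℝ) :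
    μ (tent O ∩ {q | q.2 ≤ R}) ≤ D * Cμ * ν O := by
  obtain ⟨u, hut, hdisj, hcov⟩ :=
    Vitali.exists_disjoint_subfamily_covering_enlargement_closedBall (tent O ∩ {q | q.2 ≤ R})
      Prod.fst Prod.snd R (fun _ hq => hq.2) 4 (by norm_num)
  have hpos : ∀ b ∈ u, 0 < b.2 := fun b hb => (hut hb).1.1
  have hu : u.Countable := hdisj.countable_of_nonempty_interior fun b hb =>
    ⟨b.1, ball_subset_interior_closedBall (mem_ball_self (hpos b hb))⟩
  have hcover : tent O ∩ {q | q.2 ≤ R} ⊆ ⋃ b ∈ u, tent (ball b.1 (5 * b.2)) := by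
    intro q hq
    obtain ⟨b, hb, hsub⟩ := hcov q hq
    refine mem_biUnion hb ⟨hq.1.1, ?_⟩
    exact ball_subset_closedBall.trans (hsub.trans
      (closedBall_subset_ball (by linarith [hpos b hb])))
  calc μ (tent O ∩ {q | q.2 ≤ R})
      ≤ ∑' b : u, μ (tent (ball b.1.1 (5 * b.1.2))) :=
        (measure_mono hcover).trans (measure_biUnion_le μ hu _)
    _ ≤ ∑' b : u, D * Cμ * ν (ball b.1.1 b.1.2) := ENNReal.tsum_le_tsum fun b => by
        have hb := hpos b b.2
        calc μ (tent (ball b.1.1 (5 * b.1.2))) ≤ Cμ * ν (ball b.1.1 (5 * b.1.2)) :=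
              hμ _ _ (by linarith)
          _ ≤ Cμ * (D * ν (ball b.1.1 b.1.2)) := by gcongr; exact hν _ _ hb
          _ = D * Cμ * ν (ball b.1.1 b.1.2) := by ring
    _ = D * Cμ * ν (⋃ b ∈ u, ball b.1 b.2) := by
        rw [ENNReal.tsum_mul_left, measure_biUnion hu
          (hdisj.mono fun _ => ball_subset_closedBall) fun _ _ => measurableSet_ball]
    _ ≤ D * Cμ * ν O := by
        gcongr
        exact iUnion₂_subset fun b hb => (hut hb).1.2

theorem measure_tent_le (hμ : ∀ x r, 0 < r → μ (tent (ball x r)) ≤ Cμ * ν (ball x r))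
    (hν : ∀ x r, 0 < r → ν (ball x (5 * r)) ≤ D * ν (ball x r)) (O : Set α) :
    μ (tent O) ≤ D * Cμ * ν O := by
  -- Vitali's covering lemma needs bounded radii, hence the truncation at height `R`.
  have htent : tent O = ⋃ R : ℕ, tent O ∩ {q | q.2 ≤ R} := by
    ext q
    simp only [mem_iUnion, mem_inter_iff, mem_ofPred_eq, exists_and_left]
    exact ⟨fun h => ⟨h, exists_nat_ge q.2⟩, fun h => h.1⟩
  have hmono : Monotone fun R : ℕ => tent O ∩ {q | q.2 ≤ R} := fun R R' hR =>
    inter_subset_inter_right _ fun q (hq : q.2 ≤ R) => hq.trans (Nat.cast_le.2 hR)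
  rw [htent, hmono.measure_iUnion]
  exact iSup_le fun R => measure_tent_inter_le hμ hν O R

theorem lintegral_upperHalfSpace_le_nontangentialMax
    (hμ : ∀ x r, 0 < r → μ (tent (ball x r)) ≤ Cμ * ν (ball x r))
    (hν : ∀ x r, 0 < r → ν (ball x (5 * r)) ≤ D * ν (ball x r))
    {f : α × ℝ → ENNReal} (hf : Measurable f) :
    ∫⁻ q in {q : α × ℝ | 0 < q.2}, f q ∂μ ≤ D * Cμ * ∫⁻ x, nontangentialMax f x ∂ν := by
  refine lintegral_le_mul_of_meas_lt_le hf
    (lowerSemicontinuous_nontangentialMax f).measurable _ fun l => ?_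
  rw [Measure.restrict_apply (measurableSet_lt measurable_const hf)]
  exact (measure_mono (setOf_lt_inter_subset_tent f l)).trans (measure_tent_le hμ hν _)

end Tent

theorem volume_ball_five_mul (n : ℕ) (x : EuclideanSpace ℝ (Fin n)) (r : ℝ) :
    volume (ball x (5 * r)) = ENNReal.ofReal (5 ^ n) * volume (ball x r) := by
  rw [Measure.addHaar_ball_mul_of_pos _ _ (by norm_num), finrank_euclideanSpace_fin,
    Measure.addHaar_ball_center volume x r]

/-- Carleson measure inequality: if μ has Carleson norm
sup_B μ(T(B))/|B| ≤ C_μ and 𝒩(f) ∈ L^p, then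
∫∫ f^p dμ ≤ C(n,p) ‖𝒩(f)‖_{L^p}^p C_μ. -/
theorem carleson_inequality (n : ℕ) (p : ℝ) (hp : 0 < p) :
    ∃ C : ENNReal, 0 < C ∧ C ≠ ⊤ ∧
      ∀ (μ : Measure (EuclideanSpace ℝ (Fin n) × ℝ)) (Cμ : ENNReal)
        (f : EuclideanSpace ℝ (Fin n) × ℝ → ENNReal), Measurable f →
        (∀ (x₀ : EuclideanSpace ℝ (Fin n)) (r : ℝ), 0 < r →
          μ {q : EuclideanSpace ℝ (Fin n) × ℝ |
              0 < q.2 ∧ ball q.1 q.2 ⊆ ball x₀ r} ≤ Cμ * volume (ball x₀ r)) →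
        (∫⁻ x, (⨆ q ∈ {q : EuclideanSpace ℝ (Fin n) × ℝ | dist q.1 x < q.2}, f q) ^ p)
            < ⊤ →
        (∫⁻ q in {q : EuclideanSpace ℝ (Fin n) × ℝ | 0 < q.2}, f q ^ p ∂μ) ≤
          C * (∫⁻ x, (⨆ q ∈ {q : EuclideanSpace ℝ (Fin n) × ℝ |
              dist q.1 x < q.2}, f q) ^ p) * Cμ := by
  refine ⟨ENNReal.ofReal (5 ^ n), ENNReal.ofReal_pos.2 (by positivity), ENNReal.ofReal_ne_top,
    fun μ Cμ f hf hμ _ => ?_⟩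
  calc ∫⁻ q in {q | 0 < q.2}, f q ^ p ∂μ
      ≤ ENNReal.ofReal (5 ^ n) * Cμ * ∫⁻ x, nontangentialMax (fun q => f q ^ p) x :=
        lintegral_upperHalfSpace_le_nontangentialMax hμ
          (fun x r _ => (volume_ball_five_mul n x r).le) (hf.pow_const p)
    _ ≤ ENNReal.ofReal (5 ^ n) * Cμ * ∫⁻ x, nontangentialMax f x ^ p := by
        gcongr with x
        exact nontangentialMax_rpow_le f hp.le x
    _ = ENNReal.ofReal (5 ^ n) * (∫⁻ x, nontangentialMax f x ^ p) * Cμ := mul_right_comm _ _ _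
end
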